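/- If r ≤ 0.4302, then 2(√(1−2r) + r(2 arctan(√(4(1−r)² − 1)) − arccos(r/(1−r)))) ≥ 0.9926; moreover the map r ↦ 2(√(1−2r) + r(2 arctan(√(4(1−r)²−1)) − arccos(r/(1−r)))) is decreasing on [1−1/√3, 1/2]. -/

import Mathlib

/-!
Write `s = √(1 - 2r)` and `t = √(4(1 - r)² - 1)`. For `r < 1/2` the function is differentiable
with derivative `2(-1/s + 2 arctan t - arccos (r/(1-r)) + r/(1-r) · (1/s - 2/t))`. On `[2/5, 1/2]`
we have `2ts < 1`, so `arctan t ≤ t < 1/(2s)` makes `-1/s + 2 arctan t` negative; `arccos ≥ 0`;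
and `t ≤ 2s` (equivalent to `r ≤ 1/2`) makes the last term nonpositive. Hence the function is
antitone there, and the lower bound reduces to its value at `0.4302`. That value is estimated by
moving the arguments of `arctan` close to `0` with `arctan x = π/4 - arctan ((1-x)/(1+x))`
(for `arccos`, after `arccos u = arctan (√(1-u²)/u)`) and then using Taylor bounds for `arctan`.
-/

open Real Set

namespace Real

lemma arctan_le_self {x : ℝ} (hx : 0 ≤ x) : arctan x ≤ x := by
  simpa only [tan_arctan] using le_tan (arctan_nonneg.2 hx) (arctan_lt_pi_div_two x)

lemma sub_pow_three_div_three_le_arctan {x : ℝ} (hx : 0 ≤ x) : x - x ^ 3 / 3 ≤ arctan x := by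
  have hmono : Monotone fun y => arctan y - (y - y ^ 3 / 3) := by
    refine monotone_of_hasDerivAt_nonneg (f' := fun y => y ^ 4 / (1 + y ^ 2)) (fun y => ?_)
      fun y => by positivity
    refine ((hasDerivAt_arctan y).sub ((hasDerivAt_id y).sub
      ((hasDerivAt_pow 3 y).div_const 3))).congr_deriv ?_
    field_simp
    ring
  simpa using hmono hx

lemma arctan_le_sub_add_pow_five_div_five {x : ℝ} (hx : 0 ≤ x) :
    arctan x ≤ x - x ^ 3 / 3 + x ^ 5 / 5 := by
  have hmono : Monotone fun y => y - y ^ 3 / 3 + y ^ 5 / 5 - arctan y := by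
    refine monotone_of_hasDerivAt_nonneg (f' := fun y => y ^ 6 / (1 + y ^ 2)) (fun y => ?_)
      fun y => by positivity
    refine ((((hasDerivAt_id y).sub ((hasDerivAt_pow 3 y).div_const 3)).add
      ((hasDerivAt_pow 5 y).div_const 5)).sub (hasDerivAt_arctan y)).congr_deriv ?_
    field_simp
    ring
  simpa using hmono hx

lemma arctan_eq_pi_div_four_sub_arctan {x : ℝ} (hx : -1 < x) :
    arctan x = π / 4 - arctan ((1 - x) / (1 + x)) := by
  have hx1 : 0 < 1 + x := by linarith
  have hprod : x * ((1 - x) / (1 + x)) < 1 := by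
    rw [← mul_div_assoc, div_lt_one hx1]
    nlinarith [sq_nonneg x]
  have hsum : (x + (1 - x) / (1 + x)) / (1 - x * ((1 - x) / (1 + x))) = 1 := by
    rw [div_eq_one_iff_eq (sub_pos.2 hprod).ne']
    field_simp
    ring
  rw [eq_sub_iff_add_eq, arctan_add hprod, hsum, arctan_one]

end Real

noncomputable def sectorBound (r : ℝ) : ℝ :=
  2 * (√(1 - 2 * r) + r * (2 * arctan √(4 * (1 - r) ^ 2 - 1) - arccos (r / (1 - r))))

lemma continuousOn_sectorBound : ContinuousOn sectorBound (Iio 1) := by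
  have hquot : ContinuousOn (fun r : ℝ => r / (1 - r)) (Iio 1) :=
    continuousOn_id.div (continuousOn_const.sub continuousOn_id) fun r hr => (sub_pos.2 hr).ne'
  unfold sectorBound
  fun_prop

lemma hasDerivAt_sectorBound {x : ℝ} (hx : x < 1 / 2) :
    HasDerivAt sectorBound
      (2 * (-(1 / √(1 - 2 * x)) + 2 * arctan √(4 * (1 - x) ^ 2 - 1) - arccos (x / (1 - x))
        + x / (1 - x) * (1 / √(1 - 2 * x) - 2 / √(4 * (1 - x) ^ 2 - 1)))) x := by
  have h1x : 0 < 1 - x := by linarith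
  have hS : 0 < 1 - 2 * x := by linarith
  have hT : 0 < 4 * (1 - x) ^ 2 - 1 := by nlinarith
  have hu : x / (1 - x) < 1 := by rw [div_lt_one h1x]; linarith
  have hu' : x / (1 - x) ≠ -1 := by
    rw [Ne, div_eq_iff h1x.ne']; intro h; linarith
  have hw : √(1 - (x / (1 - x)) ^ 2) = √(1 - 2 * x) / (1 - x) := by
    rw [show 1 - (x / (1 - x)) ^ 2 = (1 - 2 * x) / (1 - x) ^ 2 by field_simp; ring,
      sqrt_div hS.le, sqrt_sq h1x.le]
  have dS : HasDerivAt (fun r => √(1 - 2 * r)) (-2 / (2 * √(1 - 2 * x))) x :=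
    (((hasDerivAt_id x).const_mul 2).const_sub 1).sqrt hS.ne' |>.congr_deriv (by simp)
  have dA : HasDerivAt (fun r => arctan √(4 * (1 - r) ^ 2 - 1))
      (1 / (1 + √(4 * (1 - x) ^ 2 - 1) ^ 2) *
        (4 * (2 * (1 - x) * -1) / (2 * √(4 * (1 - x) ^ 2 - 1)))) x :=
    ((((hasDerivAt_id x).const_sub 1).pow 2).const_mul 4 |>.sub_const 1).sqrt hT.ne'
      |>.arctan |>.congr_deriv (by simp)
  have dC : HasDerivAt (fun r => arccos (r / (1 - r)))
      (-(1 / √(1 - (x / (1 - x)) ^ 2)) * ((1 * (1 - x) - x * -1) / (1 - x) ^ 2)) x :=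
    (hasDerivAt_arccos hu' hu.ne).comp (h := fun r => r / (1 - r)) x
      ((hasDerivAt_id x).div ((hasDerivAt_id x).const_sub 1) h1x.ne')
  refine ((dS.add ((hasDerivAt_id x).mul ((dA.const_mul 2).sub dC))).const_mul 2).congr_deriv ?_
  simp only [Pi.sub_apply, id_eq]
  rw [hw, sq_sqrt hT.le]
  have := sqrt_pos.2 hS
  have := sqrt_pos.2 hT
  field_simp
  ring

lemma antitoneOn_sectorBound : AntitoneOn sectorBound (Icc (2 / 5) (1 / 2)) := by
  refine antitoneOn_of_hasDerivWithinAt_nonpos (convex_Icc _ _)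
    (continuousOn_sectorBound.mono fun r hr => by simp only [mem_Iio]; linarith [hr.2])
    (fun x hx => (hasDerivAt_sectorBound (interior_Icc.subset hx).2).hasDerivWithinAt)
    fun x hx => ?_
  obtain ⟨hx1, hx2⟩ := interior_Icc.subset hx
  set s := √(1 - 2 * x)
  set t := √(4 * (1 - x) ^ 2 - 1)
  have hs : s ^ 2 = 1 - 2 * x := sq_sqrt (by linarith)
  have ht : t ^ 2 = 4 * (1 - x) ^ 2 - 1 := sq_sqrt (by nlinarith)
  have hs0 : 0 < s := sqrt_pos.2 (by linarith)
  have ht0 : 0 < t := sqrt_pos.2 (by nlinarith)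
  have hts : 2 * t * s < 1 := by
    have : (2 * t * s) ^ 2 < 1 := by
      rw [mul_pow, mul_pow, hs, ht]; nlinarith
    nlinarith
  have ht2s : t ≤ 2 * s := by nlinarith
  have harctan : 2 * arctan t < 1 / s := by
    rw [lt_div_iff₀ hs0]; nlinarith [arctan_le_self ht0.le]
  have hlast : x / (1 - x) * (1 / s - 2 / t) ≤ 0 :=
    mul_nonpos_of_nonneg_of_nonpos (div_nonneg (by linarith) (by linarith))
      (sub_nonpos.2 ((div_le_div_iff₀ hs0 ht0).2 (by linarith)))
  nlinarith [arccos_nonneg (x / (1 - x))]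

lemma pi_div_four_sub_le_arctan_sqrt_at_0_4302 :
    π / 4 - 0.285253 ≤ arctan √(4 * (1 - 0.4302) ^ 2 - 1) := by
  set t := √(4 * (1 - (0.4302 : ℝ)) ^ 2 - 1)
  have ht : 0.5465237 ≤ t := (le_sqrt (by norm_num) (by norm_num)).2 (by norm_num)
  have hc : (1 - t) / (1 + t) ≤ 0.29322299 := by
    rw [div_le_iff₀ (by positivity)]; linarith
  have := (arctan_le_arctan_iff.2 hc).trans (arctan_le_sub_add_pow_five_div_five (by norm_num))
  rw [arctan_eq_pi_div_four_sub_arctan (by linarith)]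
  norm_num at this
  linarith

lemma arccos_at_0_4302_le : arccos (0.4302 / (1 - 0.4302)) ≤ π / 4 - 0.070258 := by
  have hu : (0 : ℝ) < 0.4302 / (1 - 0.4302) := by norm_num
  rw [arccos_eq_arctan hu]
  set q := √(1 - (0.4302 / (1 - 0.4302) : ℝ) ^ 2) / (0.4302 / (1 - 0.4302))
  have hq0 : 0 < q := div_pos (sqrt_pos.2 (by norm_num)) hu
  have hq : q ≤ 0.868505 := by
    rw [div_le_iff₀ hu, sqrt_le_left (by norm_num)]; norm_num
  have hd : 0.07037444 ≤ (1 - q) / (1 + q) := by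
    rw [le_div_iff₀ (by positivity)]; linarith
  have := (sub_pow_three_div_three_le_arctan (by norm_num)).trans (arctan_le_arctan_iff.2 hd)
  rw [arctan_eq_pi_div_four_sub_arctan (by linarith)]
  norm_num at this
  linarith

lemma le_sectorBound_at_0_4302 : 0.9926 ≤ sectorBound 0.4302 := by
  have hs : (0.3736308 : ℝ) ≤ √(1 - 2 * 0.4302) :=
    (le_sqrt (by norm_num) (by norm_num)).2 (by norm_num)
  have := pi_div_four_sub_le_arctan_sqrt_at_0_4302
  have := arccos_at_0_4302_le
  have := pi_gt_d6
  unfold sectorBound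
  linarith

/-- The sector-length lower bound function
`r ↦ 2(√(1−2r) + r(2 arctan √(4(1−r)²−1) − arccos(r/(1−r))))`
is at least `0.9926` for `r ∈ [1−1/√3, 0.4302]`, and is decreasing
on `[1−1/√3, 1/2]`. -/
theorem sector_bound_function_props :
    (∀ r : ℝ, 1 - 1 / Real.sqrt 3 ≤ r → r ≤ 0.4302 →
      0.9926 ≤ 2 * (Real.sqrt (1 - 2 * r) +
        r * (2 * Real.arctan (Real.sqrt (4 * (1 - r) ^ 2 - 1))
          - Real.arccos (r / (1 - r))))) ∧
    AntitoneOn (fun r : ℝ => 2 * (Real.sqrt (1 - 2 * r) +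
        r * (2 * Real.arctan (Real.sqrt (4 * (1 - r) ^ 2 - 1))
          - Real.arccos (r / (1 - r)))))
      (Set.Icc (1 - 1 / Real.sqrt 3) (1 / 2)) := by
  have h : (2 / 5 : ℝ) ≤ 1 - 1 / √3 := by
    rw [le_sub_comm, div_le_iff₀ (by positivity)]
    nlinarith [sq_sqrt (show (0 : ℝ) ≤ 3 by norm_num), sqrt_nonneg 3]
  refine ⟨fun r hr hr' => ?_, antitoneOn_sectorBound.mono (Icc_subset_Icc_left h)⟩
  exact le_sectorBound_at_0_4302.trans
    (antitoneOn_sectorBound ⟨h.trans hr, by linarith⟩ ⟨by linarith, by norm_num⟩ hr')
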